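/- arXiv:1906.10268 — 5 statements merged into one kernel-verified Lean document; each statement's English description precedes it below -/
import Mathlib

section
/- Let G_n be the undirected path graph on vertices v_0, v_1, ..., v_n with edges e_i = {v_{i-1}, v_i}. If π is a partition of the vertex set {v_0, ..., v_n} such that the quotient multigraph G_n^π (obtained by identifying vertices according to the blocks of π) is a double tree (i.e., its underlying simple graph is a tree and every edge of the quotient has multiplicity exactly two), then v_0 and v_n lie in the same block of π. -/
/-- The underlying simple graph of the quotient of the path graph on vertices
`v_0, …, v_n` (edges `e_i = {v_{i-1}, v_i}`, indexed by `i : Fin n`) under the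
quotient map `c` identifying vertices according to the blocks of a partition:
`v` and `w` are adjacent iff they are distinct and some edge of the path has
image `{v, w}`. -/
def pathQuotientGraph {n : ℕ} {B : Type*} (c : Fin (n + 1) → B) : SimpleGraph B where
  Adj v w := v ≠ w ∧ ∃ i : Fin n, s(c i.castSucc, c i.succ) = s(v, w)
  symm := ⟨fun v w ⟨hne, i, hi⟩ => ⟨hne.symm, i, hi.trans (Sym2.eq_swap)⟩⟩
  loopless := ⟨fun v h => h.1 rfl⟩

/-!
The quotient map traces a walk `c 0, c 1, …, c n` through every edge of the quotient
multigraph. Each interior visit of the walk to a block accounts for two edge ends there, so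
if `c 0 ≠ c n` the block `c 0` lies on an odd number of edges (no loops, so no edge is counted
twice). In a double tree edges come in parallel pairs, so every block lies on an even number.
-/

open Finset

theorem card_filter_castSucc_add_card_filter_succ {n : ℕ} {B : Type*} [DecidableEq B]
    (c : Fin (n + 1) → B) (b : B) :
    #{i : Fin n | c i.castSucc = b} + #{i : Fin n | c i.succ = b}
      + (if c 0 = b then 1 else 0) + (if c (Fin.last n) = b then 1 else 0)
      = 2 * #{j | c j = b} := by
  have hcastSucc := Fin.sum_univ_castSucc (fun j => if c j = b then 1 else 0)
  have hsucc := Fin.sum_univ_succ (fun j => if c j = b then 1 else 0)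
  simp only [card_filter]
  omega

theorem odd_card_filter_mem_of_ne_last {n : ℕ} {B : Type*} [DecidableEq B]
    (c : Fin (n + 1) → B) (hloopless : ∀ i : Fin n, c i.castSucc ≠ c i.succ)
    (hne : c 0 ≠ c (Fin.last n)) :
    Odd #{i : Fin n | c 0 ∈ s(c i.castSucc, c i.succ)} := by
  have hdisj : Disjoint (univ.filter fun i : Fin n => c i.castSucc = c 0)
      (univ.filter fun i : Fin n => c i.succ = c 0) :=
    disjoint_filter.mpr fun i _ h₁ h₂ => hloopless i (h₁.trans h₂.symm)
  have hsplit : #{i : Fin n | c 0 ∈ s(c i.castSucc, c i.succ)}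
      = #{i : Fin n | c i.castSucc = c 0} + #{i : Fin n | c i.succ = c 0} := by
    simp only [Sym2.mem_iff, eq_comm (a := c 0), filter_or, card_union_of_disjoint hdisj]
  have hcount := card_filter_castSucc_add_card_filter_succ c (c 0)
  rw [if_pos rfl, if_neg (Ne.symm hne)] at hcount
  exact ⟨#{j | c j = c 0} - 1, by omega⟩

theorem even_card_filter_of_even_card_fiber {ι α : Type*} [Fintype ι] [DecidableEq α]
    (f : ι → α) (hfiber : ∀ i, Even #{i' | f i' = f i}) (p : α → Prop) [DecidablePred p] :
    Even #{i | p (f i)} := by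
  rw [card_eq_sum_card_image f]
  refine Finset.even_sum _ fun a ha => ?_
  obtain ⟨i, hi, rfl⟩ := mem_image.mp ha
  have hp : p (f i) := (mem_filter.mp hi).2
  have hfiber_eq : univ.filter (fun i' => p (f i') ∧ f i' = f i) = univ.filter (f · = f i) :=
    filter_congr fun i' _ => and_iff_right_of_imp fun h => h ▸ hp
  rw [filter_filter, hfiber_eq]
  exact hfiber i

theorem path_quotient_double_tree_endpoints_general {n : ℕ} {B : Type*}
    (c : Fin (n + 1) → B)
    (hloopless : ∀ i : Fin n, c i.castSucc ≠ c i.succ)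
    (hmult : ∀ i : Fin n,
      Nat.card {i' : Fin n // s(c i'.castSucc, c i'.succ) = s(c i.castSucc, c i.succ)} = 2) :
    c 0 = c (Fin.last n) := by
  classical
  by_contra hne
  have hodd := odd_card_filter_mem_of_ne_last c hloopless hne
  have heven := even_card_filter_of_even_card_fiber (fun i : Fin n => s(c i.castSucc, c i.succ))
    (fun i => by
      rw [← Fintype.card_subtype, ← Nat.card_eq_fintype_card, hmult i]
      exact even_two)
    (c 0 ∈ ·)
  exact Nat.not_even_iff_odd.mpr hodd heven

/-- If the quotient multigraph of the path graph `G_n` by a partition (encoded by a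
surjective quotient map `c` onto the set of blocks `B`) is a double tree — no loops,
underlying simple graph a tree, and every edge of multiplicity exactly two — then
`v_0` and `v_n` lie in the same block. -/
theorem path_quotient_double_tree_endpoints {n : ℕ} {B : Type*} [Fintype B]
    (c : Fin (n + 1) → B) (hsurj : Function.Surjective c)
    (hloopless : ∀ i : Fin n, c i.castSucc ≠ c i.succ)
    (htree : (pathQuotientGraph c).IsTree)
    (hmult : ∀ i : Fin n,
      Nat.card {i' : Fin n // s(c i'.castSucc, c i'.succ) = s(c i.castSucc, c i.succ)} = 2) :
    c 0 = c (Fin.last n) :=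
  path_quotient_double_tree_endpoints_general c hloopless hmult
end

section
/- Let ℓ ≥ 1, let γ = (1,2,...,2ℓ) be the full cycle in the symmetric group S_{2ℓ}, and let π be a pair partition of {1,...,2ℓ} regarded as an involutive permutation. Then the number of cycles of γ∘π satisfies #(γ∘π) ≤ ℓ + 1, with equality if and only if π is a non-crossing pair partition. -/
/-- A pair partition of `{1, …, m}`, regarded as a fixed-point-free involution. -/
def IsPairing {m : ℕ} (π : Equiv.Perm (Fin m)) : Prop :=
  π * π = 1 ∧ ∀ i, π i ≠ i

/-- A pair partition is non-crossing if there are no blocks `{a, c}` and `{b, d}`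
with `a < b < c < d`. -/
def IsNonCrossingPairing {m : ℕ} (π : Equiv.Perm (Fin m)) : Prop :=
  ¬ ∃ a b c d : Fin m, a < b ∧ b < c ∧ c < d ∧ π a = c ∧ π b = d

/-- The number of cycles of a permutation of `Fin n` (fixed points count as cycles). -/
def numCycles {n : ℕ} (σ : Equiv.Perm (Fin n)) : ℕ :=
  Multiset.card σ.cycleType + (n - σ.support.card)

/-!
Removing a block `{a, b}` of an involution `π` multiplies `γ π` on the right by the
transposition `(a b)`. This raises the number of cycles by one when `a` and `b` lie in the same
cycle and lowers it by one otherwise; the change is odd because it flips the sign. A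
non-crossing `π ≠ 1` has a block `{a, b}` with every point strictly between `a` and `b` fixed;
removing it keeps `π` non-crossing, and `a`, `b` lie in one cycle of the new `γ π`, so a cycle
is gained. If `π` has crossing blocks `{p, r}`, `{q, s}` with `p < q < r < s`, remove `{p, r}`:
either the rest is still crossing, or it is non-crossing and then the arc `(q, s]` is invariant
under the new `γ π`, which separates `p` from `r`, so a cycle is lost. Induction on the number of
blocks gives `2 #(γ π) ≤ #supp π + 2`, with equality exactly for non-crossing `π`.
-/

open Equiv Finset

namespace Equiv.Perm

variable {α : Type*} {σ : Perm α} {a b x y : α}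

theorem SameCycle.mem_of_mapsTo [Finite α] {s : Set α} (hs : Set.MapsTo σ s s)
    (h : σ.SameCycle x y) (hx : x ∈ s) : y ∈ s := by
  obtain ⟨i, rfl⟩ := h.exists_nat_pow_eq
  exact hs.perm_pow i hx

variable [DecidableEq α]

theorem card_quotient_sameCycle [Fintype α] (σ : Perm α) :
    Nat.card (Quotient (SameCycle.setoid σ)) =
      Multiset.card σ.cycleType + (Fintype.card α - #σ.support) := by
  let φ : α → σ.cycleFactorsFinset ⊕ Function.fixedPoints σ := fun x =>
    if hx : σ x = x then .inr ⟨x, hx⟩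
    else .inl ⟨σ.cycleOf x, cycleOf_mem_cycleFactorsFinset_iff.2 (mem_support.2 hx)⟩
  have hker : SameCycle.setoid σ = Setoid.ker φ := by
    ext x y
    change σ.SameCycle x y ↔ φ x = φ y
    by_cases hx : σ x = x <;> by_cases hy : σ y = y <;>
      simp only [φ, hx, hy, ↓reduceDIte, Sum.inl.injEq, Sum.inr.injEq, reduceCtorEq, iff_false,
        Subtype.ext_iff]
    · exact ⟨fun h => h.eq_of_left hx, fun h => h ▸ SameCycle.rfl⟩
    · exact fun h => hy (h.apply_eq_self_iff.1 hx)
    · exact fun h => hx (h.apply_eq_self_iff.2 hy)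
    · exact sameCycle_iff_cycleOf_eq_of_mem_support (mem_support.2 hx) (mem_support.2 hy)
  have hφ : Function.Surjective φ := by
    rintro (⟨c, hc⟩ | ⟨x, hx⟩)
    · obtain ⟨x, hxc⟩ := (mem_cycleFactorsFinset_iff.1 hc).1.nonempty_support
      have hxσ := mem_cycleFactorsFinset_support_le hc hxc
      exact ⟨x, by simp [φ, mem_support.1 hxσ, cycle_is_cycleOf hxc hc]⟩
    · exact ⟨x, by simp [φ, show σ x = x from hx]⟩
  rw [hker, Nat.card_congr (Setoid.quotientKerEquivOfSurjective φ hφ), Nat.card_sum,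
    Nat.card_eq_fintype_card, Nat.card_eq_fintype_card, card_fixedPoints, sum_cycleType,
    Fintype.card_coe, cycleType_def, Multiset.card_map]
  rfl

theorem mul_swap_apply_of_ne (ha : x ≠ a) (hb : x ≠ b) : (σ * swap a b) x = σ x := by
  rw [mul_apply, swap_apply_of_ne_of_ne ha hb]

theorem card_support_mul_swap_add_two [Fintype α] {π : Perm α} (hπ : Function.Involutive π)
    (hab : a ≠ b) (hπa : π a = b) : #(π * swap a b).support + 2 = #π.support := by
  have hπb : π b = a := hπa ▸ hπ a
  have hsupp : (π * swap a b).support = π.support \ {a, b} := by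
    ext x
    rcases eq_or_ne x a with rfl | hxa
    · simp [hπb]
    rcases eq_or_ne x b with rfl | hxb
    · simp [hπa]
    · simp [mul_swap_apply_of_ne hxa hxb, hxa, hxb]
  have hsub : {a, b} ⊆ π.support := by
    simp [insert_subset_iff, hπa, hπb, hab, hab.symm]
  rw [hsupp, card_sdiff_of_subset hsub, card_pair hab,
    Nat.sub_add_cancel (card_pair hab ▸ card_le_card hsub)]

section Finite

variable [Finite α]

theorem SameCycle.of_mul_swap (hab : σ.SameCycle a b) (h : (σ * swap a b).SameCycle x y) :
    σ.SameCycle x y := by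
  refine h.mem_of_mapsTo (s := {z | σ.SameCycle x z}) (fun z hz => ?_) SameCycle.rfl
  suffices σ.SameCycle z (swap a b z) from sameCycle_apply_right.2 (hz.trans this)
  rcases eq_or_ne z a with rfl | hza
  · rwa [swap_apply_left]
  rcases eq_or_ne z b with rfl | hzb
  · rw [swap_apply_right]; exact hab.symm
  · rw [swap_apply_of_ne_of_ne hza hzb]

theorem sameCycle_mul_swap_iff (ha : ¬σ.SameCycle x a) (hb : ¬σ.SameCycle x b) :
    (σ * swap a b).SameCycle x y ↔ σ.SameCycle x y := by
  have hagree : ∀ z, σ.SameCycle x z → (σ * swap a b) z = σ z := fun z hz =>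
    mul_swap_apply_of_ne (fun h => ha (h ▸ hz)) (fun h => hb (h ▸ hz))
  have hsub : ∀ y, (σ * swap a b).SameCycle x y → σ.SameCycle x y := fun y h =>
    h.mem_of_mapsTo (s := {z | σ.SameCycle x z})
      (fun z hz => hagree z hz ▸ sameCycle_apply_right.2 hz) SameCycle.rfl
  refine ⟨hsub y, fun h => h.mem_of_mapsTo (s := {z | (σ * swap a b).SameCycle x z})
    (fun z hz => ?_) SameCycle.rfl⟩
  exact hagree z (hsub z hz) ▸ sameCycle_apply_right.2 hz

theorem SameCycle.mul_swap_left_or_right (h : σ.SameCycle a x) :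
    (σ * swap a b).SameCycle a x ∨ (σ * swap a b).SameCycle b x := by
  set f := σ * swap a b
  refine h.mem_of_mapsTo (s := {z | f.SameCycle a z ∨ f.SameCycle b z})
    (fun z hz => ?_) (Or.inl SameCycle.rfl)
  have hσz : σ z = f (swap a b z) := by simp [f]
  simp only [Set.mem_ofPred_eq, hσz, sameCycle_apply_right]
  rcases eq_or_ne z a with rfl | hza
  · rw [swap_apply_left]; exact Or.inr SameCycle.rfl
  rcases eq_or_ne z b with rfl | hzb
  · rw [swap_apply_right]; exact Or.inl SameCycle.rfl
  · rwa [swap_apply_of_ne_of_ne hza hzb]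

theorem sameCycle_mul_swap_of_not_sameCycle (h : ¬σ.SameCycle a b) :
    (σ * swap a b).SameCycle a b := by
  set f := σ * swap a b
  by_contra hf
  -- then the points of the `σ`-cycle of `a` that `f` reaches from `b` form a `σ`-invariant set
  -- containing `σ a` but not `a`
  have hmaps : Set.MapsTo σ {z | σ.SameCycle a z ∧ f.SameCycle b z}
      {z | σ.SameCycle a z ∧ f.SameCycle b z} := by
    rintro z ⟨haz, hbz⟩
    have hfz : f z = σ z :=
      mul_swap_apply_of_ne (by rintro rfl; exact hf hbz.symm) (by rintro rfl; exact h haz)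
    exact ⟨sameCycle_apply_right.2 haz, hfz ▸ sameCycle_apply_right.2 hbz⟩
  have hfb : f b = σ a := by simp [f]
  have hσa : σ a ∈ {z | σ.SameCycle a z ∧ f.SameCycle b z} :=
    ⟨sameCycle_apply_right.2 .rfl, hfb ▸ sameCycle_apply_right.2 .rfl⟩
  exact hf (SameCycle.mem_of_mapsTo hmaps (sameCycle_apply_left.2 .rfl) hσa).2.symm

theorem card_quotient_sameCycle_le_mul_swap (hab : σ.SameCycle a b) :
    Nat.card (Quotient (SameCycle.setoid σ)) ≤
      Nat.card (Quotient (SameCycle.setoid (σ * swap a b))) :=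
  Nat.card_le_card_of_surjective (Quotient.map id fun _ _ => hab.of_mul_swap)
    (Quotient.ind fun x => ⟨⟦x⟧, rfl⟩)

theorem card_quotient_sameCycle_mul_swap_le (hab : σ.SameCycle a b) :
    Nat.card (Quotient (SameCycle.setoid (σ * swap a b))) ≤
      Nat.card (Quotient (SameCycle.setoid σ)) + 1 := by
  classical
  set f := σ * swap a b
  -- the class of `b` goes to `none`; every other class of `f` lies in a different class of `σ`
  let ψ : Quotient (SameCycle.setoid f) → Option (Quotient (SameCycle.setoid σ)) :=
    Quotient.lift (fun x => if f.SameCycle b x then none else some ⟦x⟧)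
      fun x y (hxy : f.SameCycle x y) => by
      by_cases hbx : f.SameCycle b x
      · simp [hbx, hbx.trans hxy]
      · have hby : ¬f.SameCycle b y := fun hby => hbx (hby.trans hxy.symm)
        rw [if_neg hbx, if_neg hby]
        exact congrArg some (Quotient.sound (hab.of_mul_swap hxy))
  refine Finite.card_option (α := Quotient (SameCycle.setoid σ)) ▸
    Nat.card_le_card_of_injective ψ ?_
  refine Quotient.ind₂ fun x y hψ => Quotient.sound ?_
  by_cases hbx : f.SameCycle b x <;> by_cases hby : f.SameCycle b y <;>
    simp only [ψ, Quotient.lift_mk, hbx, hby, ↓reduceIte, reduceCtorEq, Option.some.injEq,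
      Quotient.eq] at hψ
  · exact hbx.symm.trans hby
  by_cases hxa : σ.SameCycle x a
  · have hx := (hxa.symm.mul_swap_left_or_right (b := b)).resolve_right hbx
    have hy := ((hxa.symm.trans hψ).mul_swap_left_or_right (b := b)).resolve_right hby
    exact hx.symm.trans hy
  · exact (sameCycle_mul_swap_iff hxa fun hxb => hxa (hxb.trans hab.symm)).2 hψ

end Finite

end Equiv.Perm

theorem Function.Involutive.mul_swap {α : Type*} [DecidableEq α] {π : Perm α}
    (hπ : Function.Involutive π) {a b : α} (hπa : π a = b) :
    Function.Involutive (π * Equiv.swap a b) := by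
  have hπb : π b = a := hπa ▸ hπ a
  have hcomm : Equiv.swap a b * π = π * Equiv.swap a b := by
    have h := Equiv.swap_apply_apply π a b
    rw [hπa, hπb, Equiv.swap_comm b a] at h
    conv_lhs => rw [h, inv_mul_cancel_right]
  intro x
  change (π * Equiv.swap a b * (π * Equiv.swap a b)) x = x
  rw [mul_assoc, ← mul_assoc (Equiv.swap a b), hcomm, mul_assoc, Equiv.swap_mul_self, mul_one,
    Perm.mul_apply, hπ]

open Equiv.Perm

section Counting

variable {n : ℕ} {σ : Perm (Fin n)} {a b : Fin n}

theorem numCycles_eq_card_quotient (σ : Perm (Fin n)) :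
    numCycles σ = Nat.card (Quotient (SameCycle.setoid σ)) := by
  rw [card_quotient_sameCycle, Fintype.card_fin, numCycles]

theorem sign_eq_neg_one_pow_numCycles (σ : Perm (Fin n)) :
    sign σ = (-1) ^ (n + numCycles σ) := by
  have hle : #σ.support ≤ n := by simpa using card_le_univ σ.support
  have : n + numCycles σ = #σ.support + Multiset.card σ.cycleType + 2 * (n - #σ.support) := by
    rw [numCycles]; omega
  rw [this, pow_add, pow_mul, neg_one_sq, one_pow, mul_one, sign_of_cycleType, sum_cycleType]

theorem numCycles_mul_swap_of_sameCycle (hab : a ≠ b) (h : σ.SameCycle a b) :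
    numCycles (σ * swap a b) = numCycles σ + 1 := by
  have hlo := card_quotient_sameCycle_le_mul_swap h
  have hhi := card_quotient_sameCycle_mul_swap_le h
  rw [← numCycles_eq_card_quotient, ← numCycles_eq_card_quotient] at hlo hhi
  obtain heq | heq : numCycles (σ * swap a b) = numCycles σ ∨
      numCycles (σ * swap a b) = numCycles σ + 1 := by omega
  · -- a transposition flips the sign, hence the parity of the number of cycles
    have hsign : sign (σ * swap a b) = -sign σ := by
      rw [Perm.sign_mul, sign_swap hab, mul_neg_one]
    rw [sign_eq_neg_one_pow_numCycles, sign_eq_neg_one_pow_numCycles, heq] at hsign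
    exact absurd hsign (units_ne_neg_self _)
  · exact heq

theorem numCycles_mul_swap_of_not_sameCycle (h : ¬σ.SameCycle a b) :
    numCycles (σ * swap a b) + 1 = numCycles σ := by
  have hab : a ≠ b := by rintro rfl; exact h SameCycle.rfl
  simpa [mul_swap_mul_self] using
    (numCycles_mul_swap_of_sameCycle hab (sameCycle_mul_swap_of_not_sameCycle h)).symm

theorem numCycles_mul_swap_le (σ : Perm (Fin n)) (a b : Fin n) :
    numCycles (σ * swap a b) ≤ numCycles σ + 1 := by
  by_cases h : σ.SameCycle a b
  · rcases eq_or_ne a b with rfl | hab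
    · rw [swap_self, ← Perm.one_def, mul_one]
      omega
    · exact (numCycles_mul_swap_of_sameCycle hab h).le
  · have := numCycles_mul_swap_of_not_sameCycle h
    omega

theorem numCycles_finRotate (hn : n ≠ 0) : numCycles (finRotate n) = 1 := by
  obtain rfl | hn2 : n = 1 ∨ 2 ≤ n := by omega
  · simp [numCycles, finRotate_one, ← Perm.one_def]
  · simp [numCycles, cycleType_finRotate_of_le hn2, support_finRotate_of_le hn2]

end Counting

section NonCrossing

variable {n : ℕ} {π : Perm (Fin n)}

theorem val_finRotate_of_lt {x : Fin n} (h : x.val + 1 < n) : (finRotate n x).val = x.val + 1 := by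
  rw [finRotate_apply, Fin.val_add_one_of_lt' h]

theorem sameCycle_finRotate_mul_of_forall_fixed {a b : Fin n} (hab : a ≤ b)
    (hfix : ∀ x, a ≤ x → x < b → π x = x) : (finRotate n * π).SameCycle a b := by
  obtain ⟨b, hb⟩ := b
  induction b with
  | zero => rw [show a = ⟨0, hb⟩ from Fin.ext (Nat.le_zero.1 hab)]
  | succ k ih =>
    rcases eq_or_lt_of_le hab with rfl | hlt
    · exact SameCycle.rfl
    have hk : a ≤ ⟨k, by omega⟩ := Nat.lt_succ_iff.1 hlt
    have hstep : (finRotate n * π) ⟨k, by omega⟩ = ⟨k + 1, hb⟩ := by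
      rw [mul_apply, hfix _ hk (Nat.lt_succ_self k), Fin.ext_iff, val_finRotate_of_lt hb]
    exact hstep ▸ sameCycle_apply_right.2
      (ih _ hk fun x hax hxk => hfix x hax (Nat.lt_succ_of_lt hxk))

theorem isNonCrossingPairing_one : IsNonCrossingPairing (1 : Perm (Fin n)) :=
  fun ⟨_, _, _, _, hab, hbc, _, hac, _⟩ => (hab.trans hbc).ne hac

theorem IsNonCrossingPairing.apply_mem_Ioo (hNC : IsNonCrossingPairing π)
    (hπ : Function.Involutive π) {q s x : Fin n} (hqs : π q = s) (hx : x ∈ Set.Ioo q s) :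
    π x ∈ Set.Ioo q s := by
  obtain ⟨hqx, hxs⟩ := hx
  have hq : π x ≠ q := fun h => hxs.ne (by rw [← hqs, ← h, hπ])
  have hs : π x ≠ s := fun h => hqx.ne' (by rw [← hπ q, hqs, ← h, hπ])
  exact ⟨lt_of_le_of_ne (not_lt.1 fun h => hNC ⟨π x, q, x, s, h, hqx, hxs, hπ x, hqs⟩)
    hq.symm, lt_of_le_of_ne (not_lt.1 fun h => hNC ⟨q, x, s, π x, hqx, hxs, h, hqs, rfl⟩) hs⟩

theorem IsNonCrossingPairing.mul_swap (hNC : IsNonCrossingPairing π) (hπ : Function.Involutive π)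
    {a b : Fin n} (hπa : π a = b) : IsNonCrossingPairing (π * swap a b) := by
  have hmoved : ∀ x, (π * swap a b) x ≠ x → (π * swap a b) x = π x := by
    intro x hx
    refine mul_swap_apply_of_ne ?_ ?_ <;> rintro rfl
    · exact hx (by rw [mul_apply, swap_apply_left, ← hπa, hπ])
    · exact hx (by rw [mul_apply, swap_apply_right, hπa])
  rintro ⟨p, q, r, s, hpq, hqr, hrs, hp, hq⟩
  refine hNC ⟨p, q, r, s, hpq, hqr, hrs, ?_, ?_⟩
  · rw [← hmoved p (hp ▸ (hpq.trans hqr).ne'), hp]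
  · rw [← hmoved q (hq ▸ (hqr.trans hrs).ne'), hq]

theorem IsNonCrossingPairing.exists_adjacent (hNC : IsNonCrossingPairing π)
    (hπ : Function.Involutive π) (hne : π ≠ 1) :
    ∃ a b, a < b ∧ π a = b ∧ ∀ x, a < x → x < b → π x = x := by
  classical
  have hS : (univ.filter fun a => a < π a).Nonempty := by
    obtain ⟨x, hx⟩ : ∃ x, π x ≠ x := by
      by_contra! h
      exact hne (Equiv.ext h)
    rcases hx.lt_or_gt with h | h
    · exact ⟨π x, by simpa [hπ x] using h⟩
    · exact ⟨x, by simpa using h⟩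
  -- a block `{a, π a}` of minimal length contains no moved point `x`: by `apply_mem_Ioo`,
  -- `{x, π x}` would be a shorter block
  obtain ⟨a, ha, hmin⟩ := exists_min_image _ (fun a => (π a).val - a.val) hS
  simp only [mem_filter, mem_univ, true_and] at ha hmin
  refine ⟨a, π a, ha, rfl, fun x hax hxb => ?_⟩
  by_contra hx
  obtain ⟨h1, h2⟩ := hNC.apply_mem_Ioo hπ rfl ⟨hax, hxb⟩
  rw [Fin.lt_def] at hax hxb h1 h2
  rcases Ne.lt_or_gt hx with h | h
  · have := hmin (π x) (by rwa [hπ x])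
    rw [hπ x, Fin.lt_def] at *
    omega
  · have := hmin x h
    rw [Fin.lt_def] at h
    omega

theorem not_sameCycle_finRotate_mul_of_separated (hπ : Function.Involutive π)
    (hNC : IsNonCrossingPairing π) {p q r s : Fin n} (hpq : p < q) (hqr : q < r) (hrs : r < s)
    (hqs : π q = s) : ¬(finRotate n * π).SameCycle p r := by
  have hmaps : Set.MapsTo (finRotate n * π) (Set.Ioc q s) (Set.Ioc q s) := by
    rintro x ⟨hqx, hxs⟩
    have hy : q ≤ π x ∧ π x < s := by
      rcases hxs.lt_or_eq with hxs | hxs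
      · exact Set.Ioo_subset_Ico_self (hNC.apply_mem_Ioo hπ hqs ⟨hqx, hxs⟩)
      · rw [hxs, ← hqs, hπ, hqs]
        exact ⟨le_rfl, hqr.trans hrs⟩
    rw [Fin.le_def, Fin.lt_def] at hy
    rw [mul_apply, Set.mem_Ioc, Fin.lt_def, Fin.le_def, val_finRotate_of_lt (by omega)]
    omega
  exact fun h => (h.symm.mem_of_mapsTo hmaps ⟨hqr, hrs.le⟩).1.not_gt hpq

theorem numCycles_finRotate_mul_of_adjacent (hπ : Function.Involutive π) {a b : Fin n}
    (hab : a < b) (hπa : π a = b) (hfix : ∀ x, a < x → x < b → π x = x) :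
    numCycles (finRotate n * π) = numCycles (finRotate n * (π * swap a b)) + 1 := by
  have hsc : (finRotate n * (π * swap a b)).SameCycle a b := by
    refine sameCycle_finRotate_mul_of_forall_fixed hab.le fun x hax hxb => ?_
    rcases hax.lt_or_eq with hax | rfl
    · rw [mul_swap_apply_of_ne hax.ne' hxb.ne, hfix x hax hxb]
    · rw [mul_apply, swap_apply_left, ← hπa, hπ]
  rw [← numCycles_mul_swap_of_sameCycle hab.ne hsc, mul_assoc, mul_swap_mul_self]

theorem numCycles_finRotate_mul_of_crossing (hπ : Function.Involutive π) {p q r s : Fin n}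
    (hpq : p < q) (hqr : q < r) (hrs : r < s) (hπp : π p = r) (hπq : π q = s)
    (hNC : IsNonCrossingPairing (π * swap p r)) :
    numCycles (finRotate n * π) + 1 = numCycles (finRotate n * (π * swap p r)) := by
  have hπ'q : (π * swap p r) q = s := by rw [mul_swap_apply_of_ne hpq.ne' hqr.ne, hπq]
  have h := numCycles_mul_swap_of_not_sameCycle
    (not_sameCycle_finRotate_mul_of_separated (hπ.mul_swap hπp) hNC hpq hqr hrs hπ'q)
  rwa [mul_assoc, mul_swap_mul_self] at h

end NonCrossing

theorem two_mul_numCycles_finRotate_mul_le_and_eq_iff {n : ℕ} (hn : n ≠ 0) {π : Perm (Fin n)}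
    (hπ : Function.Involutive π) :
    2 * numCycles (finRotate n * π) ≤ #π.support + 2 ∧
      (2 * numCycles (finRotate n * π) = #π.support + 2 ↔ IsNonCrossingPairing π) := by
  induction hk : #π.support using Nat.strong_induction_on generalizing π with
  | _ k ih =>
  rcases eq_or_ne π 1 with rfl | hne
  · subst hk
    simp [numCycles_finRotate hn, isNonCrossingPairing_one]
  have ih_swap : ∀ {a b}, a ≠ b → π a = b →
      2 * numCycles (finRotate n * (π * swap a b)) ≤ k ∧
        (2 * numCycles (finRotate n * (π * swap a b)) = k ↔
          IsNonCrossingPairing (π * swap a b)) := fun hab hπa => by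
    have hcard := card_support_mul_swap_add_two hπ hab hπa
    have := ih _ (by omega) (hπ.mul_swap hπa) rfl
    rwa [hcard, hk] at this
  by_cases hNC : IsNonCrossingPairing π
  · obtain ⟨a, b, hab, hπa, hfix⟩ := hNC.exists_adjacent hπ hne
    have hN := numCycles_finRotate_mul_of_adjacent hπ hab hπa hfix
    have := (ih_swap hab.ne hπa).2.2 (hNC.mul_swap hπ hπa)
    exact ⟨by omega, iff_of_true (by omega) hNC⟩
  · obtain ⟨p, q, r, s, hpq, hqr, hrs, hπp, hπq⟩ := not_not.1 hNC
    obtain ⟨hle, hiff⟩ := ih_swap (hpq.trans hqr).ne hπp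
    have hlt : 2 * numCycles (finRotate n * π) < k + 2 := by
      by_cases hNC' : IsNonCrossingPairing (π * swap p r)
      · have hN := numCycles_finRotate_mul_of_crossing hπ hpq hqr hrs hπp hπq hNC'
        have := hiff.2 hNC'
        omega
      · have hN := numCycles_mul_swap_le (finRotate n * (π * swap p r)) p r
        rw [mul_assoc, mul_swap_mul_self] at hN
        have := mt hiff.1 hNC'
        omega
    exact ⟨hlt.le, iff_of_false hlt.ne hNC⟩

/-- For `ℓ ≥ 1`, `γ = (1,2,…,2ℓ)` the full cycle and `π` a pair partition of
`{1, …, 2ℓ}` (a fixed-point-free involution), the number of cycles of `γ ∘ π`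
satisfies `#(γ∘π) ≤ ℓ + 1`, with equality iff `π` is non-crossing. -/
theorem numCycles_cycle_mul_pairing_le {ℓ : ℕ} (hℓ : 1 ≤ ℓ)
    (π : Equiv.Perm (Fin (2 * ℓ))) (hπ : IsPairing π) :
    numCycles (finRotate (2 * ℓ) * π) ≤ ℓ + 1 ∧
      (numCycles (finRotate (2 * ℓ) * π) = ℓ + 1 ↔ IsNonCrossingPairing π) := by
  have hinv : Function.Involutive π := fun x => by rw [← Perm.mul_apply, hπ.1, Perm.one_apply]
  have hsupp : #π.support = 2 * ℓ := by
    rw [eq_univ_of_forall fun x => mem_support.2 (hπ.2 x), card_univ, Fintype.card_fin]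
  obtain ⟨hle, heq⟩ := two_mul_numCycles_finRotate_mul_le_and_eq_iff (by omega) hinv
  rw [hsupp] at hle heq
  exact ⟨by omega, by rw [← heq]; omega⟩
end

section
/- Let N, b ∈ ℕ with 2b+1 ≤ N, and let G = (V, E) be a finite connected simple graph with m = #V ≥ 2 vertices. Let Q(N, b, G) be the number of maps η : V → [N] with |η(v) - η(w)|_N ≤ b for every edge {v,w} ∈ E (periodic distance). Then Q(N, b, G) ≥ N·(⌊(2b+1)/(m-1)⌋)^{m-1}. -/
/-- The periodic distance `|j - k|_N = min(|j - k|, N - |j - k|)` on `[N]`,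
here modelled on `Fin N`. -/
def pdist (N : ℕ) (j k : Fin N) : ℕ :=
  min ((j.val : ℤ) - (k.val : ℤ)).natAbs (N - ((j.val : ℤ) - (k.val : ℤ)).natAbs)

private lemma aux_pdist (N b a x y : ℕ) (hNb : 2 * b + 1 ≤ N) (ha : a < N)
    (hxy : x ≤ y + b) (hyx : y ≤ x + b) (hx : x ≤ 2 * b) (hy : y ≤ 2 * b) :
    pdist N ⟨(a + x + (N - b)) % N, Nat.mod_lt _ (by omega)⟩
      ⟨(a + y + (N - b)) % N, Nat.mod_lt _ (by omega)⟩ ≤ b := by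
  have hN : 0 < N := by omega
  set s := a + x + (N - b) with hs
  set t := a + y + (N - b) with ht
  obtain ⟨q1, hq1, h1⟩ : ∃ q, q < 3 ∧ s % N + N * q = s :=
    ⟨s / N, (Nat.div_lt_iff_lt_mul hN).mpr (by omega), Nat.mod_add_div s N⟩
  obtain ⟨q2, hq2, h2⟩ : ∃ q, q < 3 ∧ t % N + N * q = t :=
    ⟨t / N, (Nat.div_lt_iff_lt_mul hN).mpr (by omega), Nat.mod_add_div t N⟩
  have hm1 : s % N < N := Nat.mod_lt _ hN
  have hm2 : t % N < N := Nat.mod_lt _ hN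
  simp only [pdist]
  interval_cases q1 <;> interval_cases q2 <;> omega

private lemma mod_cancel (a e : ℕ) {N x y : ℕ} (hx : x < N) (hy : y < N)
    (h : (a + x + e) % N = (a + y + e) % N) : x = y := by
  have h1 : (a + e) + x ≡ (a + e) + y [MOD N] := by
    have h0 : a + x + e = (a + e) + x := by ring
    have h2 : a + y + e = (a + e) + y := by ring
    unfold Nat.ModEq
    rw [← h0, ← h2]; exact h
  have h3 : x ≡ y [MOD N] := h1.add_left_cancel' _
  rwa [Nat.ModEq, Nat.mod_eq_of_lt hx, Nat.mod_eq_of_lt hy] at h3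

/-- For `2b + 1 ≤ N` and a finite connected simple graph `G` with `m = #V ≥ 2`
vertices, the number `Q` of maps `η : V → [N]` satisfying the band condition
`|η(v) - η(w)|_N ≤ b` along every edge satisfies
`Q ≥ N · ⌊(2b+1)/(m-1)⌋^{m-1}`. -/
theorem band_labelings_lower_bound {N b : ℕ} (hNb : 2 * b + 1 ≤ N)
    {V : Type*} [Fintype V] (G : SimpleGraph V) (hconn : G.Connected)
    (hm : 2 ≤ Fintype.card V) :
    N * ((2 * b + 1) / (Fintype.card V - 1)) ^ (Fintype.card V - 1) ≤
      Nat.card {η : V → Fin N // ∀ v w : V, G.Adj v w → pdist N (η v) (η w) ≤ b} := by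
  classical
  set m := Fintype.card V with hmdef
  set d := (2 * b + 1) / (m - 1) with hddef
  rcases Nat.eq_zero_or_pos d with hd0 | hdpos
  · rw [hd0, Nat.zero_pow (by omega), Nat.mul_zero]; exact Nat.zero_le _
  have hN : 0 < N := by omega
  have hdle : d ≤ 2 * b + 1 := by rw [hddef]; exact Nat.div_le_self _ _
  obtain ⟨v₀⟩ : Nonempty V := Fintype.card_pos_iff.mp (by omega)
  let g : Fin N × ({v : V // v ≠ v₀} → Fin d) → (V → Fin N) := fun p v =>
    if h : v = v₀ then p.1
    else ⟨(p.1.val + (p.2 ⟨v, h⟩).val + (N - b)) % N, Nat.mod_lt _ hN⟩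
  have hbase : ∀ (a : Fin N),
      (⟨(a.val + b + (N - b)) % N, Nat.mod_lt _ hN⟩ : Fin N) = a := by
    intro a
    have ha := a.isLt
    ext
    simp only
    rw [show a.val + b + (N - b) = a.val + N by omega, Nat.add_mod_right,
      Nat.mod_eq_of_lt ha]
  have hprop : ∀ p, ∀ v w : V, G.Adj v w → pdist N (g p v) (g p w) ≤ b := by
    rintro ⟨a, tt⟩ v w hvw
    have hne : v ≠ w := hvw.ne
    by_cases hv : v = v₀ <;> by_cases hw : w = v₀
    · exact absurd (hv ▸ hw ▸ hvw) (G.irrefl)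
    · subst hv
      have htw := (tt ⟨w, hw⟩).isLt
      simp only [g, dif_pos rfl, dif_neg hw]
      have haux := aux_pdist N b a.val b (tt ⟨w, hw⟩).val hNb a.isLt (by omega)
        (by omega) (by omega) (by omega)
      rwa [hbase a] at haux
    · subst hw
      have htv := (tt ⟨v, hv⟩).isLt
      simp only [g, dif_pos rfl, dif_neg hv]
      have haux := aux_pdist N b a.val (tt ⟨v, hv⟩).val b hNb a.isLt (by omega)
        (by omega) (by omega) (by omega)
      rwa [hbase a] at haux
    · have h3 : 3 ≤ m := by
        have hsub : ({v₀, v, w} : Finset V).card ≤ m := by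
          rw [hmdef, ← Finset.card_univ]
          exact Finset.card_le_card (Finset.subset_univ _)
        have hc : ({v₀, v, w} : Finset V).card = 3 := by
          rw [Finset.card_insert_of_notMem (by
            simp only [Finset.mem_insert, Finset.mem_singleton]
            push_neg
            exact ⟨fun h => hv h.symm, fun h => hw h.symm⟩),
            Finset.card_insert_of_notMem (by simpa using hne),
            Finset.card_singleton]
        omega
      have hdb : d ≤ b := by
        have h2 : d ≤ (2 * b + 1) / 2 := by
          rw [hddef]; exact Nat.div_le_div_left (by omega) (by omega)
        omega
      have htv := (tt ⟨v, hv⟩).isLt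
      have htw := (tt ⟨w, hw⟩).isLt
      simp only [g, dif_neg hv, dif_neg hw]
      exact aux_pdist N b a.val (tt ⟨v, hv⟩).val (tt ⟨w, hw⟩).val hNb a.isLt
        (by omega) (by omega) (by omega) (by omega)
  have hinj : Function.Injective g := by
    intro p q hpq
    have h0 : p.1 = q.1 := by
      have := congrFun hpq v₀
      simpa [g] using this
    have h1 : p.2 = q.2 := by
      funext vv
      obtain ⟨v, hv⟩ := vv
      have hv' := congrFun hpq v
      simp only [g, dif_neg hv] at hv'
      have hval := congrArg Fin.val hv'
      simp only at hval
      rw [h0] at hval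
      have hx : (p.2 ⟨v, hv⟩).val < N := by
        have := (p.2 ⟨v, hv⟩).isLt; omega
      have hy : (q.2 ⟨v, hv⟩).val < N := by
        have := (q.2 ⟨v, hv⟩).isLt; omega
      exact Fin.ext (mod_cancel q.1.val (N - b) hx hy hval)
    exact Prod.ext h0 h1
  let f : Fin N × ({v : V // v ≠ v₀} → Fin d) →
      {η : V → Fin N // ∀ v w : V, G.Adj v w → pdist N (η v) (η w) ≤ b} :=
    fun p => ⟨g p, hprop p⟩
  have hfinj : Function.Injective f := fun p q h => hinj (congrArg Subtype.val h)
  have hcard : Nat.card (Fin N × ({v : V // v ≠ v₀} → Fin d)) = N * d ^ (m - 1) := by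
    have hsub : Fintype.card {v : V // v ≠ v₀} = m - 1 := by
      rw [hmdef]
      simp [Fintype.card_subtype_compl]
    simp [Nat.card_eq_fintype_card, Fintype.card_fun, hsub]
  calc N * d ^ (m - 1) = Nat.card (Fin N × ({v : V // v ≠ v₀} → Fin d)) := hcard.symm
    _ ≤ _ := Nat.card_le_card_of_injective f hfinj
end

section
/- The value of the integral I = (1/16)·∫_{[0,4]²} 1{|t|₄ ≤ 1}·1{|s|₄ ≤ 1}·1{|t−s|₄ ≤ 1} dt ds equals 3/16, where |x|₄ = min(|x|, 4 − |x|) is the periodic distance on [0,4]. -/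
/-!
Only `t, s ∈ [0, 1] ∪ [3, 4]` contribute. For `t ∈ [0, 1]` the admissible `s` form
`[0, 1] ∪ [t + 3, 4]`, of length `2 - t`; the reflection `(t, s) ↦ (4 - t, 4 - s)` preserves the
integrand and gives `t - 2` for `t ∈ [3, 4]`. Hence the double integral is `3/2 + 3/2 = 3`.
-/

open MeasureTheory

/-- The periodic distance `|x|₄ = min(|x|, 4 − |x|)` on the circle of circumference
`4`, for `x ∈ [−4, 4]`. -/
noncomputable def pd4 (x : ℝ) : ℝ := min |x| (4 - |x|)

open Set

lemma pd4_le_one_iff (x : ℝ) : pd4 x ≤ 1 ↔ |x| ≤ 1 ∨ 3 ≤ |x| := by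
  rw [pd4, min_le_iff, sub_le_comm]
  norm_num

lemma pd4_four_sub {x : ℝ} (hx : x ∈ Icc (0 : ℝ) 4) : pd4 (4 - x) = pd4 x := by
  rw [pd4, pd4, abs_of_nonneg (sub_nonneg.2 hx.2), abs_of_nonneg hx.1, sub_sub_cancel, min_comm]

lemma pd4_sub_comm (x y : ℝ) : pd4 (x - y) = pd4 (y - x) := by
  rw [pd4, pd4, abs_sub_comm]

noncomputable def triangleIndicator (t s : ℝ) : ℝ :=
  (if pd4 t ≤ 1 then 1 else 0) * (if pd4 s ≤ 1 then 1 else 0) *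
    (if pd4 (t - s) ≤ 1 then 1 else 0)

lemma triangleIndicator_four_sub {t s : ℝ} (ht : t ∈ Icc (0 : ℝ) 4)
    (hs : s ∈ Icc (0 : ℝ) 4) :
    triangleIndicator (4 - t) (4 - s) = triangleIndicator t s := by
  rw [triangleIndicator, triangleIndicator, pd4_four_sub ht, pd4_four_sub hs,
    sub_sub_sub_cancel_left, pd4_sub_comm]

lemma triangleIndicator_of_mem_Icc_zero_one {t s : ℝ} (ht : t ∈ Icc (0 : ℝ) 1)
    (hs : s ∈ Icc (0 : ℝ) 4) :
    triangleIndicator t s = (Icc 0 1).indicator 1 s + (Icc (t + 3) 4).indicator 1 s := by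
  obtain ⟨ht0, ht1⟩ := ht
  obtain ⟨hs0, hs4⟩ := hs
  simp only [triangleIndicator, pd4_le_one_iff, abs_of_nonneg ht0, abs_of_nonneg hs0, abs_le,
    le_abs, indicator_apply, mem_Icc, Pi.one_apply]
  split_ifs <;> grind

lemma triangleIndicator_of_mem_Ioo {t : ℝ} (ht : t ∈ Ioo (1 : ℝ) 3) (s : ℝ) :
    triangleIndicator t s = 0 := by
  have ht_far : ¬ pd4 t ≤ 1 := by
    rw [pd4_le_one_iff, abs_of_pos (by linarith [ht.1])]
    exact fun h => h.elim ht.1.not_ge ht.2.not_ge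
  simp [triangleIndicator, ht_far]

lemma setIntegral_indicator_of_subset {α E : Type*} [MeasurableSpace α] [NormedAddCommGroup E]
    [NormedSpace ℝ E] {μ : Measure α} {s t : Set α} (hst : s ⊆ t) (hs : MeasurableSet s)
    (f : α → E) : ∫ x in t, s.indicator f x ∂μ = ∫ x in s, f x ∂μ := by
  rw [setIntegral_indicator hs, inter_eq_right.2 hst]

lemma setIntegral_Icc_comp_sub_left {E : Type*} [NormedAddCommGroup E] [NormedSpace ℝ E]
    (f : ℝ → E) {c : ℝ} (hc : 0 ≤ c) :
    ∫ x in Icc 0 c, f (c - x) = ∫ x in Icc 0 c, f x := by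
  simp only [integral_Icc_eq_integral_Ioc, ← intervalIntegral.integral_of_le hc,
    intervalIntegral.integral_comp_sub_left, sub_self, sub_zero]

lemma integral_triangleIndicator_of_mem_Icc_zero_one {t : ℝ} (ht : t ∈ Icc (0 : ℝ) 1) :
    ∫ s in Icc (0 : ℝ) 4, triangleIndicator t s = 2 - t := by
  have hint (a b : ℝ) : IntegrableOn ((Icc a b).indicator (1 : ℝ → ℝ)) (Icc (0 : ℝ) 4) :=
    continuous_const.integrableOn_Icc.indicator measurableSet_Icc
  rw [setIntegral_congr_fun measurableSet_Icc
      (fun s hs => triangleIndicator_of_mem_Icc_zero_one ht hs),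
    integral_add (hint _ _) (hint _ _),
    setIntegral_indicator_of_subset (Icc_subset_Icc le_rfl (by norm_num)) measurableSet_Icc,
    setIntegral_indicator_of_subset (Icc_subset_Icc (by linarith [ht.1]) le_rfl)
      measurableSet_Icc]
  simp only [Pi.one_apply, setIntegral_const, smul_eq_mul, mul_one,
    Real.volume_real_Icc_of_le zero_le_one,
    Real.volume_real_Icc_of_le (by linarith [ht.2] : t + 3 ≤ 4)]
  ring

lemma integral_triangleIndicator_four_sub {t : ℝ} (ht : t ∈ Icc (0 : ℝ) 4) :
    ∫ s in Icc (0 : ℝ) 4, triangleIndicator (4 - t) s =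
      ∫ s in Icc (0 : ℝ) 4, triangleIndicator t s := by
  rw [← setIntegral_Icc_comp_sub_left _ (by norm_num : (0 : ℝ) ≤ 4)]
  exact setIntegral_congr_fun measurableSet_Icc fun s hs => triangleIndicator_four_sub ht hs

lemma integral_triangleIndicator_of_mem_Icc_three_four {t : ℝ} (ht : t ∈ Icc (3 : ℝ) 4) :
    ∫ s in Icc (0 : ℝ) 4, triangleIndicator t s = t - 2 := by
  have hreflect := integral_triangleIndicator_of_mem_Icc_zero_one
    (t := 4 - t) ⟨by linarith [ht.2], by linarith [ht.1]⟩
  rw [integral_triangleIndicator_four_sub ⟨by linarith [ht.1], ht.2⟩] at hreflect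
  linarith

lemma integral_triangleIndicator {t : ℝ} (ht : t ∈ Icc (0 : ℝ) 4) :
    ∫ s in Icc (0 : ℝ) 4, triangleIndicator t s =
      (Icc 0 1).indicator (fun t => 2 - t) t + (Icc 3 4).indicator (fun t => t - 2) t := by
  obtain ⟨ht0, ht4⟩ := ht
  rcases le_or_gt t 1 with ht1 | ht1
  · rw [integral_triangleIndicator_of_mem_Icc_zero_one ⟨ht0, ht1⟩,
      indicator_of_mem (show t ∈ Icc (0 : ℝ) 1 from ⟨ht0, ht1⟩),
      indicator_of_notMem fun h => by linarith [h.1], add_zero]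
  rcases lt_or_ge t 3 with ht3 | ht3
  · simp only [triangleIndicator_of_mem_Ioo ⟨ht1, ht3⟩, integral_zero,
      indicator_of_notMem (fun h : t ∈ Icc 0 1 => by linarith [h.2]),
      indicator_of_notMem (fun h : t ∈ Icc 3 4 => by linarith [h.1]), add_zero]
  · rw [integral_triangleIndicator_of_mem_Icc_three_four ⟨ht3, ht4⟩,
      indicator_of_notMem fun h => by linarith [h.2],
      indicator_of_mem (show t ∈ Icc (3 : ℝ) 4 from ⟨ht3, ht4⟩), zero_add]

/-- `(1/16)·∫_{[0,4]²} 1{|t|₄ ≤ 1}·1{|s|₄ ≤ 1}·1{|t−s|₄ ≤ 1} dt ds = 3/16`. -/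
theorem quarter_torus_triangle_integral :
    (1 / 16 : ℝ) *
      (∫ t in Set.Icc (0 : ℝ) 4, ∫ s in Set.Icc (0 : ℝ) 4,
        (if pd4 t ≤ 1 then (1 : ℝ) else 0) * (if pd4 s ≤ 1 then (1 : ℝ) else 0) *
          (if pd4 (t - s) ≤ 1 then (1 : ℝ) else 0)) = 3 / 16 := by
  change _ * ∫ t in Icc (0 : ℝ) 4, ∫ s in Icc (0 : ℝ) 4, triangleIndicator t s = _
  have hint (f : ℝ → ℝ) (hf : Continuous f) (a b : ℝ) :
      IntegrableOn ((Icc a b).indicator f) (Icc (0 : ℝ) 4) :=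
    hf.integrableOn_Icc.indicator measurableSet_Icc
  have hleft : ∫ t in Icc (0 : ℝ) 1, (2 - t) = 3 / 2 := by
    rw [integral_Icc_eq_integral_Ioc, ← intervalIntegral.integral_of_le zero_le_one,
      intervalIntegral.integral_comp_sub_left (fun x => x)]
    norm_num [integral_id]
  have hright : ∫ t in Icc (3 : ℝ) 4, (t - 2) = 3 / 2 := by
    rw [integral_Icc_eq_integral_Ioc, ← intervalIntegral.integral_of_le (by norm_num),
      intervalIntegral.integral_comp_sub_right (fun x => x)]
    norm_num [integral_id]
  rw [setIntegral_congr_fun measurableSet_Icc fun t ht => integral_triangleIndicator ht,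
    integral_add (hint _ (by fun_prop) _ _) (hint _ (by fun_prop) _ _),
    setIntegral_indicator_of_subset (Icc_subset_Icc le_rfl (by norm_num)) measurableSet_Icc,
    setIntegral_indicator_of_subset (Icc_subset_Icc (by norm_num) le_rfl) measurableSet_Icc,
    hleft, hright]
  norm_num
end

section
/- Let b_N = ⌊√N⌋ (so b_N/√N → 1) and let Q(N) be the number of triples (the count of admissible labelings of the triangle graph): Q(N) = #{η : {u,v,w} → [N] : |η(u)−η(v)|_N ≤ b_N, |η(v)−η(w)|_N ≤ b_N, |η(u)−η(w)|_N ≤ b_N}. Then lim_{N→∞} Q(N)/(2b_N+1)⁴ = 3/16. Equivalently, Q(N) = N·(2b_N + 1 + 2·Σ_{j=b_N+1}^{2b_N} j) for N large enough. -/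
open Filter
open scoped Topology

/-- The number of labelings `η` of the triangle graph `K₃` by `[N]` in which all
three pairwise periodic distances are at most `b`. -/
noncomputable def triangleCount (N b : ℕ) : ℕ :=
  Nat.card {η : Fin 3 → Fin N //
    pdist N (η 0) (η 1) ≤ b ∧ pdist N (η 1) (η 2) ≤ b ∧ pdist N (η 0) (η 2) ≤ b}


/-!
Fixing the label `x` of the first vertex, a labeling is determined by the two edge differences
at `x`, read in `ZMod N` as least absolute residues `a`, `c`. When `4b < N` no difference wraps
around the circle, so the admissible labelings are `N` times the lattice points of the hexagon
`|a|, |c|, |c - a| ≤ b`, of which there are `3b² + 3b + 1`. With `b = ⌊√N⌋`, i.e.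
`b² ≤ N < (b + 1)²`, this gives `N (3b² + 3b + 1) / (2b + 1)⁴ → (1/4)(3/4) = 3/16`.
-/

open Finset

section Triangles

variable {G : Type*} [AddCommGroup G]

def triangleEquiv : (Fin 3 → G) ≃ G × G × G where
  toFun η := (η 0, η 0 - η 1, η 0 - η 2)
  invFun p := ![p.1, p.1 - p.2.1, p.1 - p.2.2]
  left_inv η := by ext i; fin_cases i <;> simp
  right_inv p := by simp

theorem card_filter_triangle_eq_card_mul [Fintype G] (P : G → Prop) [DecidablePred P] :
    #{η : Fin 3 → G | P (η 0 - η 1) ∧ P (η 1 - η 2) ∧ P (η 0 - η 2)} =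
      Fintype.card G * #{p : G × G | P p.1 ∧ P (p.2 - p.1) ∧ P p.2} := by
  rw [← card_univ, ← card_product]
  refine card_equiv triangleEquiv fun η => ?_
  simp [triangleEquiv]

end Triangles

namespace ZMod

variable {N : ℕ} [NeZero N]

theorem natAbs_valMinAbs_natCast_sub {j k : ℕ} (hj : j < N) (hk : k < N) :
    ((j : ZMod N) - k).valMinAbs.natAbs =
      min ((j : ℤ) - k).natAbs (N - ((j : ℤ) - k).natAbs) := by
  wlog hkj : k ≤ j generalizing j k
  · rw [← neg_sub, natAbs_valMinAbs_neg, this hk hj (by omega)]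
    omega
  rw [← Nat.cast_sub hkj, valMinAbs_natAbs_eq_min, val_natCast, Nat.mod_eq_of_lt (by omega)]
  omega

theorem finEquiv_apply (j : Fin N) : finEquiv N j = (j : ℕ) := by
  obtain _ | n := N
  · exact j.elim0
  · exact (natCast_zmod_val (n := n + 1) j).symm

theorem valMinAbs_intCast_of_two_mul_natAbs_lt {a : ℤ} (ha : 2 * a.natAbs < N) :
    (a : ZMod N).valMinAbs = a :=
  (valMinAbs_spec _ _).2 ⟨rfl, by omega, by omega⟩

theorem valMinAbs_sub_of_two_mul_natAbs_lt {x y : ZMod N}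
    (h : 2 * (x.valMinAbs - y.valMinAbs).natAbs < N) :
    (x - y).valMinAbs = x.valMinAbs - y.valMinAbs := by
  conv_lhs => rw [← coe_valMinAbs x, ← coe_valMinAbs y, ← Int.cast_sub]
  exact valMinAbs_intCast_of_two_mul_natAbs_lt h

end ZMod

theorem pdist_eq_natAbs_valMinAbs {N : ℕ} [NeZero N] (j k : Fin N) :
    pdist N j k = (ZMod.finEquiv N j - ZMod.finEquiv N k).valMinAbs.natAbs := by
  rw [ZMod.finEquiv_apply, ZMod.finEquiv_apply, ZMod.natAbs_valMinAbs_natCast_sub j.2 k.2, pdist]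

theorem triangleCount_eq_card_zmod (N b : ℕ) [NeZero N] :
    triangleCount N b = #{η : Fin 3 → ZMod N | (η 0 - η 1).valMinAbs.natAbs ≤ b ∧
      (η 1 - η 2).valMinAbs.natAbs ≤ b ∧ (η 0 - η 2).valMinAbs.natAbs ≤ b} := by
  rw [triangleCount, Nat.card_eq_fintype_card, Fintype.card_subtype]
  exact card_equiv (.piCongrRight fun _ => (ZMod.finEquiv N).toEquiv) fun η => by
    simp [pdist_eq_natAbs_valMinAbs]

noncomputable def hexagon (b : ℕ) : Finset (ℤ × ℤ) :=
  {p ∈ Icc (-b : ℤ) b ×ˢ Icc (-b : ℤ) b | (p.2 - p.1).natAbs ≤ b}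

theorem card_filter_valMinAbs_le_eq_card_hexagon {N b : ℕ} [NeZero N] (hb : 4 * b < N) :
    #{p : ZMod N × ZMod N | p.1.valMinAbs.natAbs ≤ b ∧ (p.2 - p.1).valMinAbs.natAbs ≤ b ∧
      p.2.valMinAbs.natAbs ≤ b} = #(hexagon b) := by
  -- `4b < N` keeps all relevant differences in `(-N/2, N/2)`, so nothing wraps around
  have cast_valMinAbs {a : ℤ} (ha : a.natAbs ≤ 2 * b) : (a : ZMod N).valMinAbs = a :=
    ZMod.valMinAbs_intCast_of_two_mul_natAbs_lt (by omega)
  refine card_nbij' (fun p => (p.1.valMinAbs, p.2.valMinAbs)) (fun q => ((q.1 : ZMod N), q.2))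
    ?_ ?_ ?_ ?_
  · rintro ⟨x, y⟩ hxy
    simp only [mem_coe, mem_filter, mem_univ, true_and] at hxy
    rw [ZMod.valMinAbs_sub_of_two_mul_natAbs_lt (by omega)] at hxy
    simp only [hexagon, mem_coe, mem_filter, mem_product, mem_Icc]
    omega
  · rintro ⟨a, c⟩ hac
    simp only [hexagon, mem_coe, mem_filter, mem_product, mem_Icc] at hac
    simp only [mem_coe, mem_filter, mem_univ, true_and, ← Int.cast_sub]
    rw [cast_valMinAbs (by omega), cast_valMinAbs (by omega), cast_valMinAbs (by omega)]
    omega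
  · rintro ⟨x, y⟩ -
    simp only [ZMod.coe_valMinAbs]
  · rintro ⟨a, c⟩ hac
    simp only [hexagon, mem_coe, mem_filter, mem_product, mem_Icc] at hac
    simp only [Prod.mk.injEq]
    exact ⟨cast_valMinAbs (by omega), cast_valMinAbs (by omega)⟩

theorem sum_Icc_two_mul_add_one_sub_natAbs (n : ℕ) :
    ∑ a ∈ Icc (-n : ℤ) n, (2 * n + 1 - a.natAbs) = 3 * n ^ 2 + 3 * n + 1 := by
  induction n with
  | zero => simp
  | succ n ih =>
    have hIcc : Icc (-(n + 1 : ℕ) : ℤ) (n + 1 : ℕ) =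
        insert (-(n + 1 : ℤ)) (insert (n + 1 : ℤ) (Icc (-n : ℤ) n)) := by
      ext a; simp only [mem_Icc, mem_insert]; omega
    rw [hIcc, sum_insert (by simp; omega), sum_insert (by simp),
      sum_congr rfl fun a ha => show 2 * (n + 1) + 1 - a.natAbs = (2 * n + 1 - a.natAbs) + 2 by
        rw [mem_Icc] at ha; omega,
      sum_add_distrib, ih, sum_const, Int.card_Icc]
    simp only [smul_eq_mul]
    ring_nf
    omega

theorem card_hexagon (b : ℕ) : #(hexagon b) = 3 * b ^ 2 + 3 * b + 1 := by
  have fiber : ∀ a ∈ Icc (-b : ℤ) b,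
      #{c ∈ Icc (-b : ℤ) b | (c - a).natAbs ≤ b} = 2 * b + 1 - a.natAbs := by
    intro a ha
    rw [mem_Icc] at ha
    have h_fiber : {c ∈ Icc (-b : ℤ) b | (c - a).natAbs ≤ b} =
        Icc (max (-b : ℤ) (a - b)) (min b (a + b)) := by
      ext c
      simp only [mem_filter, mem_Icc]
      omega
    rw [h_fiber, Int.card_Icc]
    omega
  rw [hexagon, card_filter, sum_product, ← sum_Icc_two_mul_add_one_sub_natAbs]
  exact sum_congr rfl fun a ha => by rw [← fiber a ha, card_filter]

theorem triangleCount_eq_of_four_mul_lt {N b : ℕ} (hb : 4 * b < N) :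
    triangleCount N b = N * (3 * b ^ 2 + 3 * b + 1) := by
  have : NeZero N := ⟨by omega⟩
  rw [triangleCount_eq_card_zmod, card_filter_triangle_eq_card_mul (fun x : ZMod N => x.valMinAbs.natAbs ≤ b),
    ZMod.card, card_filter_valMinAbs_le_eq_card_hexagon hb, card_hexagon]

theorem two_mul_add_one_add_two_mul_sum_Icc (b : ℕ) :
    2 * b + 1 + 2 * ∑ j ∈ Icc (b + 1) (2 * b), j = 3 * b ^ 2 + 3 * b + 1 := by
  have split := sum_range_add_sum_Ico id (show b + 1 ≤ 2 * b + 1 by omega)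
  have gauss_small := sum_range_id_mul_two (b + 1)
  have gauss_large := sum_range_id_mul_two (2 * b + 1)
  simp only [id, Nat.add_sub_cancel] at split gauss_small gauss_large
  rw [show Icc (b + 1) (2 * b) = Ico (b + 1) (2 * b + 1) by rfl]
  nlinarith

theorem Nat.tendsto_sqrt_atTop : Tendsto Nat.sqrt atTop atTop :=
  tendsto_atTop_atTop.2 fun b => ⟨b * b, fun _ h => Nat.le_sqrt.2 h⟩

theorem tendsto_sq_mul_hexagon_ratio (c : ℝ) :
    Tendsto (fun b : ℕ =>
        ((b + c) / (2 * b + 1)) ^ 2 * ((3 * b ^ 2 + 3 * b + 1) / (2 * b + 1) ^ 2))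
      atTop (𝓝 (3 / 16)) := by
  have h_inv : Tendsto (fun b : ℕ => (2 * b + 1 : ℝ)⁻¹) atTop (𝓝 0) :=
    tendsto_inv_atTop_zero.comp <| tendsto_atTop_add_const_right _ 1 <|
      tendsto_natCast_atTop_atTop.const_mul_atTop two_pos
  -- in `t = 1 / (2b + 1)` the expression is a polynomial
  have h_poly : Tendsto (fun t : ℝ => (1 / 2 + (c - 1 / 2) * t) ^ 2 * (3 / 4 + t ^ 2 / 4))
      (𝓝 0) (𝓝 (3 / 16)) :=
    (by fun_prop : Continuous _).tendsto' 0 _ (by norm_num)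
  refine (h_poly.comp h_inv).congr fun b => ?_
  rw [Function.comp_apply]
  field_simp
  ring

theorem Nat.four_mul_sqrt_lt {N : ℕ} (hN : 25 ≤ N) : 4 * Nat.sqrt N < N := by
  have h5 : 5 ≤ Nat.sqrt N := Nat.le_sqrt'.2 hN
  nlinarith [Nat.sqrt_le' N]

theorem tendsto_triangleCount_sqrt :
    Tendsto (fun N => (triangleCount N (Nat.sqrt N) : ℝ) / (2 * (Nat.sqrt N : ℝ) + 1) ^ 4)
      atTop (𝓝 (3 / 16)) := by
  have h_eq : (fun N : ℕ => (N : ℝ) / (2 * (Nat.sqrt N : ℝ) + 1) ^ 2 *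
      ((3 * Nat.sqrt N ^ 2 + 3 * Nat.sqrt N + 1) / (2 * Nat.sqrt N + 1) ^ 2)) =ᶠ[atTop]
      fun N => (triangleCount N (Nat.sqrt N) : ℝ) / (2 * (Nat.sqrt N : ℝ) + 1) ^ 4 := by
    filter_upwards [eventually_ge_atTop 25] with N hN
    rw [triangleCount_eq_of_four_mul_lt (Nat.four_mul_sqrt_lt hN)]
    push_cast
    field_simp
  refine Tendsto.congr' h_eq (tendsto_of_tendsto_of_tendsto_of_le_of_le
    ((tendsto_sq_mul_hexagon_ratio 0).comp Nat.tendsto_sqrt_atTop)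
    ((tendsto_sq_mul_hexagon_ratio 1).comp Nat.tendsto_sqrt_atTop) (fun N => ?_) (fun N => ?_))
  all_goals
    simp only [Function.comp_apply, add_zero, div_pow]
    gcongr
  · exact_mod_cast Nat.sqrt_le' N
  · exact_mod_cast (Nat.lt_succ_sqrt' N).le

/-- For `b_N = ⌊√N⌋`: the count `Q(N)` of admissible triangle labelings satisfies
`Q(N)/(2b_N+1)⁴ → 3/16`, and `Q(N) = N·(2b_N + 1 + 2·Σ_{j=b_N+1}^{2b_N} j)` for `N`
large enough. -/
theorem triangleCount_asymptotics :
    Tendsto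
        (fun N => (triangleCount N (Nat.sqrt N) : ℝ) / (2 * (Nat.sqrt N : ℝ) + 1) ^ 4)
        atTop (𝓝 (3 / 16)) ∧
      ∃ N₀ : ℕ, ∀ N ≥ N₀,
        triangleCount N (Nat.sqrt N) =
          N * (2 * Nat.sqrt N + 1 +
            2 * ∑ j ∈ Finset.Icc (Nat.sqrt N + 1) (2 * Nat.sqrt N), j) := by
  refine ⟨tendsto_triangleCount_sqrt, 25, fun N hN => ?_⟩
  rw [triangleCount_eq_of_four_mul_lt (Nat.four_mul_sqrt_lt hN), two_mul_add_one_add_two_mul_sum_Icc]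
end
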